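/- arXiv:2309.01991 — 4 statements merged into one kernel-verified Lean document; each statement's English description precedes it below -/
import Mathlib

section
/- If a c-space structure S on a topological space X contains all constant paths and every path of S is splittable in S (i.e., for each a ∈ S, the two halves a'(t) = a(t/2) and a''(t) = a((t+1)/2) lie in S), then S is a d-space structure on X. -/
open unitInterval Set

noncomputable def conc {X : Type*} (a b : I → X) : I → X := fun t =>
  if h : (t : ℝ) ≤ 1 / 2 then
    a ⟨2 * (t : ℝ), by constructor <;> nlinarith [t.2.1, t.2.2]⟩
  else
    b ⟨2 * (t : ℝ) - 1, by have h' := not_le.mp h; constructor <;> nlinarith [t.2.1, t.2.2]⟩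

structure IsCStructure {X : Type*} [TopologicalSpace X] (S : Set (I → X)) : Prop where
  cont : ∀ a ∈ S, Continuous a
  const_src : ∀ a ∈ S, (fun _ : I => a 0) ∈ S
  const_tgt : ∀ a ∈ S, (fun _ : I => a 1) ∈ S
  concat : ∀ a ∈ S, ∀ b ∈ S, a 1 = b 0 → conc a b ∈ S
  reparam : ∀ a ∈ S, ∀ ρ : I → I, Continuous ρ → Monotone ρ → Function.Surjective ρ → a ∘ ρ ∈ S

structure IsDStructure {X : Type*} [TopologicalSpace X] (S : Set (I → X)) : Prop where
  cont : ∀ a ∈ S, Continuous a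
  const : ∀ x : X, (fun _ : I => x) ∈ S
  concat : ∀ a ∈ S, ∀ b ∈ S, a 1 = b 0 → conc a b ∈ S
  reparam : ∀ a ∈ S, ∀ ρ : I → I, Continuous ρ → Monotone ρ → a ∘ ρ ∈ S

def IsFlexible {X : Type*} [TopologicalSpace X] (S : Set (I → X)) (a : I → X) : Prop :=
  a ∈ S ∧ ∀ (t₁ t₂ : ℝ) (h0 : 0 ≤ t₁) (h12 : t₁ < t₂) (h1 : t₂ ≤ 1),
    (fun t : I => a ⟨(t₂ - t₁) * (t : ℝ) + t₁, by
      constructor <;>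
        nlinarith [t.2.1, t.2.2, mul_nonneg (sub_nonneg.mpr h12.le) t.2.1,
          mul_le_of_le_one_right (sub_nonneg.mpr h12.le) t.2.2]⟩) ∈ S

/-! The map `ρ` is padded with linear ramps `0 ↝ ρ 0` and `ρ 1 ↝ 1` into a surjective increasing
map `padEnds ρ`, so `a ∘ padEnds ρ ∈ S` by (csp.2). On the middle quarter `[1/2, 3/4]` the padded
map runs through `ρ` at four times the speed, and that quarter is the first half of the second
half of `[0, 1]`: splitting twice recovers `a ∘ ρ`. -/

theorem Set.Icc.monotone_convexComb {a b : ℝ} {x y : Icc a b} (h : x ≤ y) :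
    Monotone (convexComb x y) := fun s t hst => by
  change (1 - (s : ℝ)) * x + s * y ≤ (1 - (t : ℝ)) * x + t * y
  have hxy : (x : ℝ) ≤ y := h
  have hst : (s : ℝ) ≤ t := hst
  nlinarith

theorem surjective_of_continuous_of_map_zero_of_map_one {f : I → I} (hf : Continuous f)
    (h0 : f 0 = 0) (h1 : f 1 = 1) : Function.Surjective f := fun y =>
  intermediate_value_univ 0 1 hf (by rw [h0, h1]; exact ⟨nonneg', le_one'⟩)

section conc

variable {X : Type*}

theorem conc_apply_of_le (a b : I → X) {t s : I} (ht : (t : ℝ) ≤ 1 / 2) (hs : (s : ℝ) = 2 * t) :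
    conc a b t = a s := by
  rw [conc, dif_pos ht]
  exact congrArg a (Subtype.ext hs.symm)

theorem conc_apply_of_lt (a b : I → X) {t s : I} (ht : 1 / 2 < (t : ℝ))
    (hs : (s : ℝ) = 2 * t - 1) : conc a b t = b s := by
  rw [conc, dif_neg (not_le.mpr ht)]
  exact congrArg b (Subtype.ext hs.symm)

@[simp]
theorem conc_zero (a b : I → X) : conc a b 0 = a 0 :=
  conc_apply_of_le a b (by norm_num) (by norm_num)

@[simp]
theorem conc_one (a b : I → X) : conc a b 1 = b 1 :=
  conc_apply_of_lt a b (by norm_num) (by norm_num)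

theorem Continuous.conc [TopologicalSpace X] {a b : I → X} (ha : Continuous a)
    (hb : Continuous b) (h : a 1 = b 0) : Continuous (conc a b) := by
  let γ : Path (a 0) (a 1) := ⟨⟨a, ha⟩, rfl, rfl⟩
  let γ' : Path (a 1) (b 1) := ⟨⟨b, hb⟩, h.symm, rfl⟩
  have hγ : _root_.conc a b = γ.trans γ' := funext fun t => (Path.trans_apply γ γ' t).symm
  exact hγ ▸ (γ.trans γ').continuous

theorem Monotone.conc [Preorder X] {a b : I → X} (ha : Monotone a) (hb : Monotone b)
    (h : a 1 ≤ b 0) : Monotone (conc a b) := by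
  intro s t hst
  have hst : (s : ℝ) ≤ t := hst
  unfold _root_.conc
  split_ifs with hs ht ht
  · exact ha (show 2 * (s : ℝ) ≤ 2 * t by linarith)
  · exact (ha le_one').trans (h.trans (hb nonneg'))
  · exact absurd (hst.trans ht) hs
  · exact hb (show 2 * (s : ℝ) - 1 ≤ 2 * t - 1 by linarith)

end conc

noncomputable def padEnds (ρ : I → I) : I → I :=
  conc (Icc.convexComb 0 (ρ 0)) (conc ρ (Icc.convexComb (ρ 1) 1))

theorem Continuous.padEnds {ρ : I → I} (hρ : Continuous ρ) : Continuous (padEnds ρ) :=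
  (Icc.continuous_convexComb _ _).conc (hρ.conc (Icc.continuous_convexComb _ _) (by simp))
    (by simp)

theorem Monotone.padEnds {ρ : I → I} (hρ : Monotone ρ) : Monotone (padEnds ρ) :=
  (Icc.monotone_convexComb nonneg').conc
    (hρ.conc (Icc.monotone_convexComb le_one') (by simp)) (by simp)

theorem surjective_padEnds {ρ : I → I} (hρ : Continuous ρ) :
    Function.Surjective (padEnds ρ) :=
  surjective_of_continuous_of_map_zero_of_map_one hρ.padEnds (by simp [padEnds])
    (by simp [padEnds])

theorem padEnds_apply_middle (ρ : I → I) {s t : I} (hs : (s : ℝ) = ((t : ℝ) / 2 + 1) / 2) :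
    padEnds ρ s = ρ t := by
  rcases t.2.1.eq_or_lt with ht | ht
  · rw [padEnds, conc_apply_of_le _ _ (s := 1) (by linarith) (by simp [hs, ← ht]),
      Icc.convexComb_one]
    exact congrArg ρ (show (0 : I) = t from Subtype.ext ht)
  · have ht' : (t : ℝ) / 2 ∈ I := ⟨by linarith, by linarith [le_one t]⟩
    rw [padEnds, conc_apply_of_lt _ _ (s := ⟨_, ht'⟩) (by linarith) (by simp [hs]; ring),
      conc_apply_of_le _ _ (by simp only; linarith [le_one t]) (by simp only; ring)]

/-- If a c-space structure contains all constant paths and all its paths are splittable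
(both halves are again in the structure), then it is a d-space structure. -/
theorem cStructure_splittable_isDStructure {X : Type*} [TopologicalSpace X]
    (S : Set (I → X)) (hS : IsCStructure S)
    (hconst : ∀ x : X, (fun _ : I => x) ∈ S)
    (hsplit : ∀ a ∈ S,
      (fun t : I => a ⟨(t : ℝ) / 2, by constructor <;> nlinarith [t.2.1, t.2.2]⟩) ∈ S ∧
      (fun t : I => a ⟨((t : ℝ) + 1) / 2, by constructor <;> nlinarith [t.2.1, t.2.2]⟩) ∈ S) :
    IsDStructure S := by
  refine ⟨hS.cont, hconst, hS.concat, fun a ha ρ hρc hρm => ?_⟩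
  have hpad : a ∘ padEnds ρ ∈ S :=
    hS.reparam a ha _ hρc.padEnds hρm.padEnds (surjective_padEnds hρc)
  have hmiddle := (hsplit _ (hsplit _ hpad).2).1
  convert hmiddle using 1
  exact funext fun t => congrArg a (padEnds_apply_middle ρ rfl).symm
end

section
/- The adjunction p ⊣ d holds between pTop and dTop: for a d-space X and a preordered topological space Y, a continuous map f : X → Y preserves directed paths into increasing paths (i.e., f is a d-map X → dY) if and only if f is continuous and increasing from the path-preorder pX to Y (i.e., a pTop-map pX → Y). -/
open unitInterval Set

/-- The adjunction `p ⊣ d`: a continuous map `f : X → Y` from a d-space to a preordered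
topological space is a d-map `X → dY` iff it is increasing for the path-preorder of `X`. -/
theorem p_adj_d {X Y : Type*} [TopologicalSpace X] [TopologicalSpace Y] [Preorder Y]
    (S : Set (I → X)) (hS : IsDStructure S) (f : X → Y) (hf : Continuous f) :
    (∀ a ∈ S, (f ∘ a) ∈ {b : I → Y | Continuous b ∧ Monotone b}) ↔
      (∀ x x' : X, (∃ a ∈ S, a 0 = x ∧ a 1 = x') → f x ≤ f x') := by
  constructor
  · rintro h x x' ⟨a, haS, h0, h1⟩
    have := (h a haS).2 (show (0 : I) ≤ 1 by norm_num)
    simpa [Function.comp, h0, h1] using this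
  · intro h a haS
    refine ⟨hf.comp (hS.cont a haS), ?_⟩
    intro t t' htt'
    have htt'' : (t : ℝ) ≤ (t' : ℝ) := htt'
    set ρ : I → I := fun s => ⟨(t : ℝ) + (s : ℝ) * ((t' : ℝ) - (t : ℝ)), by
      constructor
      · nlinarith [s.2.1, t.2.1]
      · nlinarith [s.2.2, t'.2.2, s.2.1, mul_le_of_le_one_left (sub_nonneg.mpr htt'') s.2.2]⟩ with hρ
    have hρc : Continuous ρ := by
      apply Continuous.subtype_mk
      continuity
    have hρm : Monotone ρ := by
      intro s s' hss'
      simp only [hρ, Subtype.mk_le_mk]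
      have : (s : ℝ) ≤ (s' : ℝ) := hss'
      exact (show (t : ℝ) + (s : ℝ) * ((t' : ℝ) - (t : ℝ)) ≤ (t : ℝ) + (s' : ℝ) * ((t' : ℝ) - (t : ℝ)) by nlinarith [sub_nonneg.mpr htt''])
    have hmem := hS.reparam a haS ρ hρc hρm
    have := h ((a ∘ ρ) 0) ((a ∘ ρ) 1) ⟨a ∘ ρ, hmem, rfl, rfl⟩
    have h0 : ρ 0 = t := by simp [hρ]
    have h1 : ρ 1 = t' := by
      simp only [hρ]
      ext
      push_cast
      ring
    simpa [Function.comp, h0, h1] using this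
end

section
/- For a c-space X, the set of flexible points |X|₀ = { x ∈ X : the constant loop at x is controlled } together with the set of flexible controlled paths (controlled paths all of whose restrictions a∘ρ along affine non-degenerate increasing maps ρ : [0,1] → [0,1] are controlled) forms a d-space structure on the subspace |X|₀. -/
open unitInterval Set

section
variable {X : Type*} [TopologicalSpace X] {S : Set (I → X)}

lemma flex_comp_mono (hS : IsCStructure S) {a : I → X} (ha : IsFlexible S a)
    {ρ : I → I} (hc : Continuous ρ) (hm : Monotone ρ) : (fun t => a (ρ t)) ∈ S := by
  have hm' : ∀ t : I, (ρ 0 : ℝ) ≤ ρ t ∧ (ρ t : ℝ) ≤ ρ 1 := fun t =>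
    ⟨hm (show (0:I) ≤ t from t.2.1), hm (show t ≤ (1:I) from t.2.2)⟩
  by_cases h : (ρ 0 : ℝ) < ρ 1
  · set u := (ρ 0 : ℝ) with hu
    set v := (ρ 1 : ℝ) with hv
    have hA := ha.2 u v (ρ 0).2.1 h (ρ 1).2.2
    have hvu : (0:ℝ) < v - u := by linarith
    set sg : I → I := fun t => ⟨((ρ t : ℝ) - u) / (v - u), by
      have := hm' t
      constructor
      · apply div_nonneg <;> linarith [this.1]
      · rw [div_le_one hvu]; linarith [this.2]⟩ with hsg
    have hcsg : Continuous sg :=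
      Continuous.subtype_mk (((continuous_subtype_val.comp hc).sub continuous_const).div_const _) _
    have hmsg : Monotone sg := by
      intro s t hst
      show ((ρ s : ℝ) - u) / (v - u) ≤ ((ρ t : ℝ) - u) / (v - u)
      gcongr
      exact_mod_cast hm hst
    have hssg : Function.Surjective sg := by
      intro y
      have h0 : sg 0 = 0 := Subtype.ext (by show (u - u)/(v-u) = 0; simp)
      have h1 : sg 1 = 1 := Subtype.ext (by show (v - u)/(v-u) = 1; field_simp)
      have := intermediate_value_univ (0:I) (1:I) hcsg
      rw [h0, h1] at this
      exact this ⟨y.2.1, y.2.2⟩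
    have hmem := hS.reparam _ hA sg hcsg hmsg hssg
    convert hmem using 1
    funext t
    show a (ρ t) = a ⟨(v - u) * (sg t : ℝ) + u, _⟩
    congr 1
    apply Subtype.ext
    show (ρ t : ℝ) = (v - u) * (((ρ t : ℝ) - u) / (v - u)) + u
    field_simp
    ring
  · have hconst : ∀ t, ρ t = ρ 0 := fun t =>
      Subtype.ext (le_antisymm (by linarith [(hm' t).2, not_lt.mp h]) (hm' t).1)
    have : (fun t => a (ρ t)) = (fun _ : I => a (ρ 0)) := by
      funext t; rw [hconst t]
    rw [this]
    by_cases hu : (ρ 0 : ℝ) < 1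
    · have hA := ha.2 (ρ 0) 1 (ρ 0).2.1 hu le_rfl
      have hmem := hS.const_src _ hA
      convert hmem using 2
      congr 1
      apply Subtype.ext
      show (ρ 0 : ℝ) = (1 - (ρ 0:ℝ)) * ((0:I):ℝ) + ρ 0
      simp
    · have h1 : ρ 0 = 1 := Subtype.ext (le_antisymm (ρ 0).2.2 (not_lt.mp hu))
      rw [h1]
      exact hS.const_tgt a ha.1
end

section
variable {X : Type*} [TopologicalSpace X] {S : Set (I → X)}

def aff (t₁ t₂ : ℝ) (h0 : 0 ≤ t₁) (h12 : t₁ < t₂) (h1 : t₂ ≤ 1) : I → I :=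
  fun t => ⟨(t₂ - t₁) * (t : ℝ) + t₁, by
    constructor <;>
      nlinarith [t.2.1, t.2.2, mul_nonneg (sub_nonneg.mpr h12.le) t.2.1,
        mul_le_of_le_one_right (sub_nonneg.mpr h12.le) t.2.2]⟩

lemma aff_cont (t₁ t₂ : ℝ) (h0 : 0 ≤ t₁) (h12 : t₁ < t₂) (h1 : t₂ ≤ 1) :
    Continuous (aff t₁ t₂ h0 h12 h1) :=
  Continuous.subtype_mk (by fun_prop) _

lemma aff_mono (t₁ t₂ : ℝ) (h0 : 0 ≤ t₁) (h12 : t₁ < t₂) (h1 : t₂ ≤ 1) :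
    Monotone (aff t₁ t₂ h0 h12 h1) := by
  intro s t hst
  show (t₂ - t₁) * (s : ℝ) + t₁ ≤ (t₂ - t₁) * (t : ℝ) + t₁
  have : (s:ℝ) ≤ t := hst
  nlinarith

lemma flex_reparam (hS : IsCStructure S) {a : I → X} (ha : IsFlexible S a)
    {ρ : I → I} (hc : Continuous ρ) (hm : Monotone ρ) :
    IsFlexible S (fun t => a (ρ t)) := by
  refine ⟨flex_comp_mono hS ha hc hm, ?_⟩
  intro t₁ t₂ h0 h12 h1
  exact flex_comp_mono hS ha (hc.comp (aff_cont t₁ t₂ h0 h12 h1))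
    (hm.comp (aff_mono t₁ t₂ h0 h12 h1))

lemma flex_const (x : X) (hx : (fun _ : I => x) ∈ S) : IsFlexible S (fun _ => x) :=
  ⟨hx, fun _ _ _ _ _ => hx⟩

end

section
variable {X : Type*} [TopologicalSpace X] {S : Set (I → X)}

set_option maxHeartbeats 3000000 in
lemma flex_concat (hS : IsCStructure S) {a b : I → X} (ha : IsFlexible S a)
    (hb : IsFlexible S b) (hab : a 1 = b 0) : IsFlexible S (conc a b) := by
  refine ⟨hS.concat a ha.1 b hb.1 hab, ?_⟩
  intro t₁ t₂ h0 h12 h1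
  rcases le_or_gt t₂ (1/2) with h2 | h2
  · -- restriction lands in a
    have hA := ha.2 (2*t₁) (2*t₂) (by linarith) (by linarith) (by linarith)
    convert hA using 1
    funext t
    have hle : (t₂ - t₁) * (t:ℝ) + t₁ ≤ 1/2 := by nlinarith [t.2.2, t.2.1]
    show conc a b ⟨(t₂ - t₁) * (t:ℝ) + t₁, _⟩ = _
    rw [conc, dif_pos (by exact hle)]
    congr 1
    apply Subtype.ext
    show 2 * ((t₂ - t₁) * (t:ℝ) + t₁) = (2*t₂ - 2*t₁) * (t:ℝ) + 2*t₁
    ring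
  rcases le_or_gt (1/2) t₁ with h3 | h3
  · -- restriction lands in b
    have hB := hb.2 (2*t₁-1) (2*t₂-1) (by linarith) (by linarith) (by linarith)
    convert hB using 1
    funext t
    show conc a b ⟨(t₂ - t₁) * (t:ℝ) + t₁, _⟩ =
      b ⟨(2*t₂-1 - (2*t₁-1)) * (t:ℝ) + (2*t₁-1), _⟩
    by_cases hs : (t₂ - t₁) * (t:ℝ) + t₁ ≤ 1/2
    · have hs2 : (t₂ - t₁) * (t:ℝ) + t₁ = 1/2 :=
        le_antisymm hs (by nlinarith [t.2.1])
      rw [conc, dif_pos (by exact hs)]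
      have e1 : (⟨2 * ((t₂ - t₁) * (t:ℝ) + t₁), by constructor <;> nlinarith⟩ : I) = 1 :=
        Subtype.ext (by show 2 * ((t₂ - t₁) * (t:ℝ) + t₁) = 1; linarith)
      rw [show a ⟨2 * ((t₂ - t₁) * (t:ℝ) + t₁), by constructor <;> nlinarith⟩ = a 1 from
        congrArg a e1, hab]
      congr 1
      apply Subtype.ext
      show (0:ℝ) = (2*t₂-1 - (2*t₁-1)) * (t:ℝ) + (2*t₁-1)
      linarith
    · rw [conc, dif_neg (by exact hs)]
      congr 1
      apply Subtype.ext
      show 2 * ((t₂ - t₁) * (t:ℝ) + t₁) - 1 = (2*t₂-1 - (2*t₁-1)) * (t:ℝ) + (2*t₁-1)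
      ring
  · -- middle case
    have hA : (a ∘ aff (2*t₁) 1 (by linarith) (by linarith) le_rfl) ∈ S :=
      ha.2 (2*t₁) 1 (by linarith) (by linarith) le_rfl
    have hB : (b ∘ aff 0 (2*t₂-1) le_rfl (by linarith) (by linarith)) ∈ S :=
      hb.2 0 (2*t₂-1) le_rfl (by linarith) (by linarith)
    set A := a ∘ aff (2*t₁) 1 (by linarith) (by linarith) le_rfl with hAdef
    set B := b ∘ aff 0 (2*t₂-1) le_rfl (by linarith) (by linarith) with hBdef
    have hAB : A 1 = B 0 := by
      show a (aff _ _ _ _ _ 1) = b (aff _ _ _ _ _ 0)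
      rw [show aff (2*t₁) 1 (by linarith) (by linarith) le_rfl 1 = 1 from
        Subtype.ext (by show (1 - 2*t₁) * ((1:I):ℝ) + 2*t₁ = 1; simp),
        show aff 0 (2*t₂-1) le_rfl (by linarith) (by linarith) 0 = 0 from
        Subtype.ext (by show (2*t₂-1 - 0) * ((0:I):ℝ) + 0 = 0; simp)]
      exact hab
    have hconcAB : conc A B ∈ S := hS.concat A hA B hB hAB
    clear_value A B
    set ts : ℝ := (1/2 - t₁) / (t₂ - t₁) with htsdef
    have ht12 : (0:ℝ) < t₂ - t₁ := by linarith
    have hts0 : 0 < ts := by apply div_pos <;> linarith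
    have hts1 : ts < 1 := by rw [div_lt_one ht12]; linarith
    have hts : (t₂ - t₁) * ts = 1/2 - t₁ := by rw [htsdef]; field_simp
    have hsgmem : ∀ t : I, (if (t:ℝ) ≤ ts then (t:ℝ)/(2*ts)
        else 1/2 + ((t:ℝ)-ts)/(2*(1-ts))) ∈ Icc (0:ℝ) 1 := by
      intro t
      split_ifs with h
      · constructor
        · exact div_nonneg t.2.1 (by linarith)
        · rw [div_le_one (by linarith)]; nlinarith [t.2.1]
      · push_neg at h
        constructor
        · have : 0 ≤ ((t:ℝ)-ts)/(2*(1-ts)) := by apply div_nonneg <;> linarith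
          linarith
        · have : ((t:ℝ)-ts)/(2*(1-ts)) ≤ 1/2 := by
            rw [div_le_iff₀ (by linarith)]; nlinarith [t.2.2]
          linarith
    set sg : I → I := fun t => ⟨_, hsgmem t⟩ with hsgdef
    have hsgval : ∀ t : I, (sg t : ℝ) = if (t:ℝ) ≤ ts then (t:ℝ)/(2*ts)
        else 1/2 + ((t:ℝ)-ts)/(2*(1-ts)) := fun t => rfl
    have hcsg : Continuous sg := by
      apply Continuous.subtype_mk
      apply Continuous.if_le
      · fun_prop
      · fun_prop
      · exact continuous_subtype_val
      · exact continuous_const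
      · intro x hx
        rw [hx]
        field_simp
        ring
    have hmsg : Monotone sg := by
      intro s t hst
      have hst' : (s:ℝ) ≤ t := hst
      show (sg s : ℝ) ≤ (sg t : ℝ)
      rw [hsgval, hsgval]
      split_ifs with hs ht
      · gcongr
      · push_neg at ht
        have e1 : (s:ℝ)/(2*ts) ≤ 1/2 := by rw [div_le_iff₀ (by linarith)]; linarith
        have e2 : 0 ≤ ((t:ℝ)-ts)/(2*(1-ts)) := by apply div_nonneg <;> linarith
        linarith
      · linarith
      · gcongr <;> linarith
    have hssg : Function.Surjective sg := by
      have hne : (1:ℝ) - ts ≠ 0 := by linarith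
      have h0 : sg 0 = 0 := by
        apply Subtype.ext
        rw [hsgval, if_pos (show ((0:I):ℝ) ≤ ts from hts0.le)]
        show (0:ℝ)/(2*ts) = (0:ℝ)
        rw [zero_div]
      have h1 : sg 1 = 1 := by
        apply Subtype.ext
        rw [hsgval, if_neg (show ¬ ((1:I):ℝ) ≤ ts from not_le.mpr hts1)]
        show 1/2 + ((1:ℝ)-ts)/(2*(1-ts)) = (1:ℝ)
        field_simp
        ring
      intro y
      have := intermediate_value_univ (0:I) (1:I) hcsg
      rw [h0, h1] at this
      exact this ⟨y.2.1, y.2.2⟩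
    clear_value sg
    have hmem := hS.reparam _ hconcAB sg hcsg hmsg hssg
    clear hsgmem hsgdef
    convert hmem using 1
    clear hmem hssg hmsg hcsg hconcAB hAB hA hB ha hb hS
    funext t
    show conc a b ⟨(t₂ - t₁) * (t:ℝ) + t₁, _⟩ = conc A B (sg t)
    rcases le_or_gt (t:ℝ) ts with hcase | hcase
    · have hsgt : (sg t : ℝ) = (t:ℝ)/(2*ts) := by rw [hsgval, if_pos hcase]
      have harg : (t₂ - t₁) * (t:ℝ) + t₁ ≤ 1/2 := by nlinarith
      have hsglt : (sg t : ℝ) ≤ 1/2 := by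
        rw [hsgt, div_le_iff₀ (show (0:ℝ) < 2*ts by linarith)]; linarith
      rw [conc, dif_pos (by exact harg)]
      rw [conc, dif_pos (by exact hsglt)]
      show a _ = A _
      rw [hAdef]
      show a _ = a (aff _ _ _ _ _ _)
      congr 1
      apply Subtype.ext
      show 2 * ((t₂ - t₁) * (t:ℝ) + t₁) = (1 - 2*t₁) * (2 * (sg t : ℝ)) + 2*t₁
      rw [hsgt]
      have e1 : (t:ℝ)/(2*ts)*(2*ts) = (t:ℝ) :=
        div_mul_cancel₀ _ (ne_of_gt (by linarith))
      linear_combination (-2*(t₂-t₁))*e1 + (4*((t:ℝ)/(2*ts)))*hts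
    · have hsgt : (sg t : ℝ) = 1/2 + ((t:ℝ)-ts)/(2*(1-ts)) := by
        rw [hsgval, if_neg (not_le.mpr hcase)]
      have harg : ¬ ((t₂ - t₁) * (t:ℝ) + t₁ ≤ 1/2) := by
        push_neg; nlinarith
      have hsglt : ¬ ((sg t : ℝ) ≤ 1/2) := by
        push_neg
        rw [hsgt]
        have : 0 < ((t:ℝ)-ts)/(2*(1-ts)) := by apply div_pos <;> linarith
        linarith
      rw [conc, dif_neg (by exact harg)]
      rw [conc, dif_neg (by exact hsglt)]
      show b _ = B _
      rw [hBdef]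
      show b _ = b (aff _ _ _ _ _ _)
      congr 1
      apply Subtype.ext
      show 2 * ((t₂ - t₁) * (t:ℝ) + t₁) - 1 = (2*t₂-1 - 0) * (2 * (sg t : ℝ) - 1) + 0
      rw [hsgt]
      have e2 : ((t:ℝ)-ts)/(2*(1-ts))*(2*(1-ts)) = (t:ℝ)-ts :=
        div_mul_cancel₀ _ (ne_of_gt (by linarith))
      linear_combination (-2*(t₂-t₁))*e2 + (2-4*(((t:ℝ)-ts)/(2*(1-ts))))*hts

end


/-- The flexible part of a c-space: flexible paths have flexible endpoints, and the flexible
paths form a d-space structure on the subspace of flexible points. -/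
theorem flexiblePart_isDStructure {X : Type*} [TopologicalSpace X] (S : Set (I → X))
    (hS : IsCStructure S) :
    (∀ a : I → X, IsFlexible S a →
      (fun _ : I => a 0) ∈ S ∧ (fun _ : I => a 1) ∈ S) ∧
    IsDStructure {b : I → {x : X // (fun _ : I => x) ∈ S} |
      IsFlexible S (fun t => (b t : X))} := by
  refine ⟨fun a ha => ⟨hS.const_src a ha.1, hS.const_tgt a ha.1⟩, ?_, ?_, ?_, ?_⟩
  · intro b hb
    exact continuous_induced_rng.mpr (hS.cont _ hb.1)
  · intro x
    exact flex_const (x : X) x.2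
  · intro a ha b hb hab
    show IsFlexible S (fun t => Subtype.val (conc a b t))
    have he : (fun t => Subtype.val (conc a b t)) =
        conc (fun t => Subtype.val (a t)) (fun t => Subtype.val (b t)) := by
      funext t
      simp only [conc]
      split_ifs <;> rfl
    rw [he]
    exact flex_concat hS ha hb (congrArg Subtype.val hab)
  · intro a ha ρ hc hm
    exact flex_reparam hS ha hc hm
end

section
/- The d-space structure generated by the controlled paths of c𝕀 is the standard d-interval ↑𝕀: the smallest set of paths in [0,1] containing the surjective increasing maps and the constant loops at 0, 1, and closed under constants, concatenation, and arbitrary increasing reparametrisation, is exactly the set of all increasing continuous maps [0,1] → [0,1]. -/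
open unitInterval Set

/-- The standard c-interval `c𝕀`. -/
def cI : Set (I → I) :=
  {a | (Continuous a ∧ Monotone a ∧ Function.Surjective a) ∨
    a = (fun _ : I => 0) ∨ a = (fun _ : I => 1)}

/-!
Increasing continuous paths in a topological preorder form a d-structure, so the generated
d-structure contains nothing else. Conversely the identity of `I` is a surjective controlled
path of `c𝕀`, and every increasing continuous `a : I → I` is its reparametrisation `id ∘ a`.
-/

lemma conc_eq_ite {X : Type*} (a b : I → X) :
    conc a b = fun t : I => if (t : ℝ) ≤ 1 / 2
      then a (projIcc 0 1 zero_le_one (2 * (t : ℝ)))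
      else b (projIcc 0 1 zero_le_one (2 * (t : ℝ) - 1)) := by
  funext t
  unfold conc
  split_ifs with h
  · congr 1
    exact (projIcc_of_mem zero_le_one (by constructor <;> nlinarith [t.2.1, t.2.2])).symm
  · have h' := not_le.mp h
    congr 1
    exact (projIcc_of_mem zero_le_one (by constructor <;> nlinarith [t.2.1, t.2.2])).symm

lemma continuous_conc {X : Type*} [TopologicalSpace X] {a b : I → X}
    (ha : Continuous a) (hb : Continuous b) (hab : a 1 = b 0) :
    Continuous (conc a b) := by
  rw [conc_eq_ite]
  refine Continuous.if_le (ha.comp (continuous_projIcc.comp (by fun_prop)))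
    (hb.comp (continuous_projIcc.comp (by fun_prop))) continuous_subtype_val continuous_const ?_
  intro t ht
  have h1 : 2 * (t : ℝ) = 1 := by rw [ht]; norm_num
  simp only [h1, sub_self, projIcc_right, projIcc_left]
  exact hab

lemma monotone_conc {X : Type*} [Preorder X] {a b : I → X}
    (ha : Monotone a) (hb : Monotone b) (hab : a 1 ≤ b 0) : Monotone (conc a b) := by
  intro s t hst
  have hst' : (s : ℝ) ≤ t := hst
  unfold conc
  split_ifs with hs ht ht
  · exact ha (Subtype.mk_le_mk.mpr (by linarith))
  · calc a ⟨2 * (s : ℝ), _⟩ ≤ a 1 := ha (Subtype.mk_le_mk.mpr (by linarith))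
      _ ≤ b 0 := hab
      _ ≤ b ⟨2 * (t : ℝ) - 1, _⟩ := hb (Subtype.mk_le_mk.mpr (by linarith))
  · exact absurd (hst'.trans (by linarith)) hs
  · exact hb (Subtype.mk_le_mk.mpr (by linarith))

lemma isDStructure_continuous_monotone (X : Type*) [TopologicalSpace X] [Preorder X] :
    IsDStructure {a : I → X | Continuous a ∧ Monotone a} where
  cont _ ha := ha.1
  const _ := ⟨continuous_const, monotone_const⟩
  concat _ ha _ hb hab := ⟨continuous_conc ha.1 hb.1 hab, monotone_conc ha.2 hb.2 hab.le⟩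
  reparam _ ha _ hρc hρm := ⟨ha.1.comp hρc, ha.2.comp hρm⟩

lemma cI_subset_continuous_monotone : cI ⊆ {a : I → I | Continuous a ∧ Monotone a} := by
  rintro a (⟨hc, hm, -⟩ | rfl | rfl)
  · exact ⟨hc, hm⟩
  all_goals exact ⟨continuous_const, monotone_const⟩

lemma id_mem_cI : (id : I → I) ∈ cI :=
  Or.inl ⟨continuous_id, monotone_id, Function.surjective_id⟩

lemma IsDStructure.continuous_monotone_subset {S : Set (I → I)} (hS : IsDStructure S)
    (hid : id ∈ S) : {a : I → I | Continuous a ∧ Monotone a} ⊆ S :=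
  fun a ha => hS.reparam id hid a ha.1 ha.2

/-- The d-structure generated by the controlled paths of `c𝕀` is the standard d-interval:
all increasing continuous maps `[0,1] → [0,1]`. -/
theorem cI_generated_dStructure :
    ⋂₀ {S : Set (I → I) | IsDStructure S ∧ cI ⊆ S} =
      {a : I → I | Continuous a ∧ Monotone a} := by
  refine Subset.antisymm ?_ ?_
  · exact sInter_subset_of_mem
      ⟨isDStructure_continuous_monotone I, cI_subset_continuous_monotone⟩
  · rintro a ha S ⟨hS, hcI⟩
    exact hS.continuous_monotone_subset (hcI id_mem_cI) ha
end
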